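/- Let (C_i) be a sequence of linear codes over F_q with lengths n_i → ∞, dimensions k_i with k_i/n_i → R, and suppose there are g_i ≥ 0 with g_i/n_i → γ and 1 - R - γ > 0 such that d_1(C_i) ≥ n_i - k_i - g_i for all i. Let (m_i) be positive integers with m_i ≤ k_i and m_i/n_i → ρ > 0. Then liminf_{i→∞} d_{m_i}(C_i)/n_i ≥ (q/(q-1))·(1 - R - γ) + ρ. -/

import Mathlib

open Filter Topology

/-- The support size of a subcode `D ⊆ F^n`: number of coordinates where some
codeword of `D` is nonzero. -/
noncomputable def codeSupp {F : Type} [Field F] {n : ℕ}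
    (D : Submodule F (Fin n → F)) : ℕ :=
  Set.ncard {i : Fin n | ∃ d ∈ D, d i ≠ 0}

/-- The `m`-th relative generalized Hamming weight of a nested pair `C2 ⊆ C1`. -/
noncomputable def RGHW {F : Type} [Field F] {n : ℕ}
    (m : ℕ) (C1 C2 : Submodule F (Fin n → F)) : ℕ :=
  sInf {w : ℕ | ∃ D : Submodule F (Fin n → F),
    D ≤ C1 ∧ Module.finrank F ↥D = m ∧ D ⊓ C2 = ⊥ ∧ codeSupp D = w}

/-- The `m`-th generalized Hamming weight of a code `C`. -/
noncomputable def GHW {F : Type} [Field F] {n : ℕ}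
    (m : ℕ) (C : Submodule F (Fin n → F)) : ℕ :=
  RGHW m C ⊥

/-- The dual code with respect to the standard bilinear form. -/
def dualCode {F : Type} [Field F] {n : ℕ}
    (C : Submodule F (Fin n → F)) : Submodule F (Fin n → F) where
  carrier := {y | ∀ x ∈ C, ∑ i, x i * y i = 0}
  add_mem' := by
    intro a b ha hb x hx
    simp only [Set.mem_setOf_eq] at *
    simp only [Pi.add_apply, mul_add, Finset.sum_add_distrib, ha x hx, hb x hx, add_zero]
  zero_mem' := by
    intro x hx; simp
  smul_mem' := by
    intro c a ha x hx
    simp only [Set.mem_setOf_eq] at *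
    simp only [Pi.smul_apply, smul_eq_mul, mul_left_comm, ← Finset.mul_sum, ha x hx, mul_zero]

/-- The subspace `V_I` of vectors supported on the coordinate set `I`. -/
def VI (F : Type) [Field F] {n : ℕ} (I : Finset (Fin n)) : Submodule F (Fin n → F) where
  carrier := {x | ∀ i, i ∉ I → x i = 0}
  add_mem' := by intro a b ha hb i hi; simp [ha i hi, hb i hi]
  zero_mem' := by intro i hi; rfl
  smul_mem' := by intro c a ha i hi; simp [ha i hi]

/-- The relative dimension length profile `K_d(C1, C2)`. -/
noncomputable def RDLP {F : Type} [Field F] {n : ℕ}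
    (d : ℕ) (C1 C2 : Submodule F (Fin n → F)) : ℕ :=
  sSup {k : ℕ | ∃ I : Finset (Fin n), I.card = d ∧
    Module.finrank F ↥(C1 ⊓ VI F I) - Module.finrank F ↥(C2 ⊓ VI F I) = k}

/-! Averaging the weights of the nonzero words of an optimal `m`-dimensional subcode gives the
ratio bound `d_m ≥ d_1 (q^m - 1)/(q^m - q^(m-1))`, and deleting a coordinate of the support of an
optimal subcode gives `d_m ≥ d_{m'} + (m - m')`. Apply the ratio bound at `M_i = ⌊√m_i⌋`, which
tends to infinity while `M_i / n_i → 0`, and then climb from `M_i` to `m_i`: the two contributions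
tend to `q/(q-1)·(1 - R - γ)` and `ρ`. -/

section GeneralizedHammingWeight

open Module Finset

attribute [local instance] Classical.propDecidable

variable {F : Type} [Field F] {n : ℕ}

noncomputable def codeSupport (D : Submodule F (Fin n → F)) : Finset (Fin n) :=
  {i | ∃ d ∈ D, d i ≠ 0}

theorem codeSupp_eq_card_codeSupport (D : Submodule F (Fin n → F)) :
    codeSupp D = #(codeSupport D) := by
  rw [codeSupp, ← Set.ncard_coe_finset, codeSupport]
  simp only [coe_filter, Finset.mem_univ, true_and]

theorem codeSupp_le_length (D : Submodule F (Fin n → F)) : codeSupp D ≤ n := by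
  simpa [codeSupp_eq_card_codeSupport] using card_le_univ (codeSupport D)

theorem codeSupp_span_singleton (v : Fin n → F) :
    codeSupp (Submodule.span F {v}) = hammingNorm v := by
  rw [codeSupp_eq_card_codeSupport, hammingNorm]
  congr 1
  ext i
  simp only [codeSupport, mem_filter, Finset.mem_univ, true_and, Submodule.mem_span_singleton]
  constructor
  · rintro ⟨_, ⟨c, rfl⟩, hci⟩ hvi
    simp [hvi] at hci
  · exact fun hvi => ⟨v, ⟨1, one_smul F v⟩, hvi⟩

theorem GHW_eq_sInf (m : ℕ) (C : Submodule F (Fin n → F)) :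
    GHW m C = sInf {w | ∃ D ≤ C, finrank F D = m ∧ codeSupp D = w} := by
  simp only [GHW, RGHW, inf_bot_eq, true_and]

theorem GHW_le_codeSupp {m : ℕ} {C D : Submodule F (Fin n → F)} (hDC : D ≤ C)
    (hD : finrank F D = m) : GHW m C ≤ codeSupp D := by
  rw [GHW_eq_sInf]
  exact Nat.sInf_le ⟨D, hDC, hD, rfl⟩

theorem exists_codeSupp_eq_GHW {m : ℕ} {C : Submodule F (Fin n → F)} (hm : m ≤ finrank F C) :
    ∃ D ≤ C, finrank F D = m ∧ codeSupp D = GHW m C := by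
  obtain ⟨s, hs, hli⟩ := exists_finset_linearIndependent_of_le_finrank (R := F) (M := C) hm
  have hD : finrank F ((Submodule.span F (s : Set C)).map C.subtype) = m := by
    rw [Submodule.finrank_map_subtype_eq, finrank_span_finset_eq_card hli, hs]
  rw [GHW_eq_sInf]
  exact Nat.sInf_mem (s := {w | ∃ D ≤ C, finrank F D = m ∧ codeSupp D = w})
    ⟨_, _, Submodule.map_subtype_le _ _, hD, rfl⟩

theorem GHW_le_length {m : ℕ} {C : Submodule F (Fin n → F)} (hm : m ≤ finrank F C) :
    GHW m C ≤ n := by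
  obtain ⟨D, -, -, hD⟩ := exists_codeSupp_eq_GHW hm
  exact hD ▸ codeSupp_le_length D

theorem GHW_one_le_hammingNorm {C : Submodule F (Fin n → F)} {v : Fin n → F} (hv : v ∈ C)
    (hv0 : v ≠ 0) : GHW 1 C ≤ hammingNorm v :=
  codeSupp_span_singleton v ▸
    GHW_le_codeSupp ((Submodule.span_singleton_le_iff_mem v C).2 hv) (finrank_span_singleton hv0)

theorem codeSupport_nonempty {D : Submodule F (Fin n → F)} (hD : D ≠ ⊥) :
    (codeSupport D).Nonempty := by
  obtain ⟨d, hd, hd0⟩ := Submodule.exists_mem_ne_zero_of_ne_bot hD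
  obtain ⟨i, hi⟩ := Function.ne_iff.1 hd0
  exact ⟨i, by simpa [codeSupport] using ⟨d, hd, hi⟩⟩

def coordOn (D : Submodule F (Fin n → F)) (i : Fin n) : Module.Dual F D :=
  (LinearMap.proj i).comp D.subtype

theorem finrank_ker_coordOn_add_one {D : Submodule F (Fin n → F)} {i : Fin n}
    (hi : i ∈ codeSupport D) : finrank F (LinearMap.ker (coordOn D i)) + 1 = finrank F D := by
  refine Module.Dual.finrank_ker_add_one_of_ne_zero fun h => ?_
  obtain ⟨d, hd, hdi⟩ : ∃ d ∈ D, d i ≠ 0 := by simpa [codeSupport] using hi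
  exact hdi (LinearMap.congr_fun h ⟨d, hd⟩)

theorem exists_finrank_add_one_eq_codeSupp_lt {D : Submodule F (Fin n → F)} (hD : D ≠ ⊥) :
    ∃ D' ≤ D, finrank F D' + 1 = finrank F D ∧ codeSupp D' < codeSupp D := by
  obtain ⟨i, hi⟩ := codeSupport_nonempty hD
  refine ⟨(LinearMap.ker (coordOn D i)).map D.subtype, Submodule.map_subtype_le _ _, ?_, ?_⟩
  · rw [Submodule.finrank_map_subtype_eq, finrank_ker_coordOn_add_one hi]
  · rw [codeSupp_eq_card_codeSupport, codeSupp_eq_card_codeSupport]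
    refine card_lt_card ((ssubset_iff_of_subset ?_).2 ⟨i, hi, ?_⟩)
    · intro j hj
      obtain ⟨_, ⟨⟨d, hd⟩, -, rfl⟩, hdj⟩ : ∃ d ∈ (LinearMap.ker (coordOn D i)).map D.subtype,
          d j ≠ 0 := by simpa [codeSupport] using hj
      simpa [codeSupport] using ⟨d, hd, hdj⟩
    · simp only [codeSupport, mem_filter, Finset.mem_univ, true_and, not_exists, not_and, not_not]
      rintro _ ⟨⟨d, hd⟩, hker, rfl⟩
      exact hker

theorem GHW_add_one_le {m : ℕ} {C : Submodule F (Fin n → F)} (hm : m + 1 ≤ finrank F C) :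
    GHW m C + 1 ≤ GHW (m + 1) C := by
  obtain ⟨D, hDC, hD, hDw⟩ := exists_codeSupp_eq_GHW hm
  have hD0 : D ≠ ⊥ := by
    rintro rfl
    simp at hD
  obtain ⟨D', hD'D, hD', hlt⟩ := exists_finrank_add_one_eq_codeSupp_lt hD0
  have := GHW_le_codeSupp (hD'D.trans hDC) (m := m) (by omega)
  omega

theorem GHW_add_sub_le {m' m : ℕ} {C : Submodule F (Fin n → F)} (hm' : m' ≤ m)
    (hm : m ≤ finrank F C) : GHW m' C + (m - m') ≤ GHW m C := by
  induction m, hm' using Nat.le_induction with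
  | base => simp
  | succ m hm' ih =>
    have := GHW_add_one_le hm
    have := ih (by omega)
    omega

section Counting

variable [Fintype F]

theorem card_coord_ne_zero {D : Submodule F (Fin n → F)} {i : Fin n} (hi : i ∈ codeSupport D) :
    #{d : D | (d : Fin n → F) i ≠ 0} =
      Fintype.card F ^ finrank F D - Fintype.card F ^ (finrank F D - 1) := by
  have hker : #{d : D | ¬(d : Fin n → F) i ≠ 0} = Fintype.card F ^ (finrank F D - 1) := by
    rw [Nat.sub_eq_of_eq_add (finrank_ker_coordOn_add_one hi).symm,
      ← card_eq_pow_finrank (V := LinearMap.ker (coordOn D i)), ← Fintype.card_subtype]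
    simp [coordOn]
  rw [← hker, ← card_eq_pow_finrank, ← Finset.card_univ,
    ← card_filter_add_card_filter_not (s := univ) fun d : D => (d : Fin n → F) i ≠ 0]
  omega

theorem sum_hammingNorm_eq (D : Submodule F (Fin n → F)) :
    ∑ d : D, hammingNorm (d : Fin n → F) =
      (Fintype.card F ^ finrank F D - Fintype.card F ^ (finrank F D - 1)) * codeSupp D := by
  have hout : ∀ i ∈ univ, i ∉ codeSupport D → #{d : D | (d : Fin n → F) i ≠ 0} = 0 := by
    intro i _ hi
    simp only [codeSupport, mem_filter, Finset.mem_univ, true_and, not_exists, not_and,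
      not_not] at hi
    simp [hi]
  rw [codeSupp_eq_card_codeSupport, mul_comm, ← smul_eq_mul, ← sum_const]
  simp only [hammingNorm, card_filter]
  rw [sum_comm]
  simp only [← card_filter]
  rw [← sum_subset (subset_univ _) hout]
  exact sum_congr rfl fun i hi => card_coord_ne_zero hi

theorem pow_sub_one_mul_GHW_one_le {m : ℕ} {C : Submodule F (Fin n → F)}
    (hm : m ≤ finrank F C) :
    (Fintype.card F ^ m - 1) * GHW 1 C ≤
      (Fintype.card F ^ m - Fintype.card F ^ (m - 1)) * GHW m C := by
  obtain ⟨D, hDC, rfl, hDw⟩ := exists_codeSupp_eq_GHW hm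
  rw [← hDw, ← sum_hammingNorm_eq]
  calc (Fintype.card F ^ finrank F D - 1) * GHW 1 C
      = ∑ _d ∈ univ.erase (0 : D), GHW 1 C := by
        rw [sum_const, smul_eq_mul, card_erase_of_mem (Finset.mem_univ _), Finset.card_univ,
          card_eq_pow_finrank (K := F) (V := D)]
    _ ≤ ∑ d ∈ univ.erase (0 : D), hammingNorm (d : Fin n → F) :=
        sum_le_sum fun d hd => GHW_one_le_hammingNorm (hDC d.2) (by simpa using ne_of_mem_erase hd)
    _ ≤ ∑ d : D, hammingNorm (d : Fin n → F) := sum_le_sum_of_subset (erase_subset _ _)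

end Counting

end GeneralizedHammingWeight

/-- For `1 ≤ m` this is `(q ^ m - 1) / (q ^ m - q ^ (m - 1))`, written so that its limit is
visible. -/
noncomputable def ghwRatio (q : ℝ) (m : ℕ) : ℝ := (1 - (q ^ m)⁻¹) / (1 - q⁻¹)

theorem ghwRatio_nonneg {q : ℝ} (hq : 1 ≤ q) (m : ℕ) : 0 ≤ ghwRatio q m :=
  div_nonneg (sub_nonneg.2 (inv_le_one_of_one_le₀ (one_le_pow₀ hq)))
    (sub_nonneg.2 (inv_le_one_of_one_le₀ hq))

theorem ghwRatio_succ {q : ℝ} (hq : 1 < q) (m : ℕ) :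
    ghwRatio q (m + 1) = (q ^ (m + 1) - 1) / (q ^ (m + 1) - q ^ m) := by
  have hqm : 0 < q ^ m := pow_pos (by linarith) m
  have hq0 : q ≠ 0 := by linarith
  rw [ghwRatio, div_eq_div_iff (sub_ne_zero.2 (inv_ne_one.2 hq.ne').symm)
    (by rw [pow_succ]; nlinarith)]
  field_simp
  ring

theorem tendsto_ghwRatio {q : ℝ} (hq : 1 < q) :
    Tendsto (ghwRatio q) atTop (𝓝 (q / (q - 1))) := by
  have h : Tendsto (ghwRatio q) atTop (𝓝 ((1 - 0) / (1 - q⁻¹))) :=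
    ((tendsto_inv_atTop_zero.comp (tendsto_pow_atTop_atTop_of_one_lt hq)).const_sub 1).div_const _
  have hq0 : q ≠ 0 := by linarith
  have hq1 : q - 1 ≠ 0 := by linarith
  convert h using 2
  field_simp
  rw [sub_zero]

section RatioBound

open Module

variable {F : Type} [Field F] [Fintype F] {n : ℕ}

theorem ghwRatio_mul_GHW_one_le {m : ℕ} {C : Submodule F (Fin n → F)} (hm1 : 1 ≤ m)
    (hm : m ≤ finrank F C) : ghwRatio (Fintype.card F) m * GHW 1 C ≤ GHW m C := by
  obtain ⟨m, rfl⟩ := Nat.exists_eq_add_of_le' hm1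
  have hq : 1 < Fintype.card F := Fintype.one_lt_card
  have hcount := pow_sub_one_mul_GHW_one_le hm
  rw [Nat.add_sub_cancel] at hcount
  have hcountR : ((Fintype.card F : ℝ) ^ (m + 1) - 1) * GHW 1 C ≤
      ((Fintype.card F : ℝ) ^ (m + 1) - Fintype.card F ^ m) * GHW (m + 1) C := by
    have : 1 ≤ Fintype.card F ^ (m + 1) := Nat.one_le_pow _ _ (by omega)
    have : Fintype.card F ^ m ≤ Fintype.card F ^ (m + 1) :=
      Nat.pow_le_pow_right (by omega) m.le_succ
    exact_mod_cast hcount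
  have hpos : (0 : ℝ) < (Fintype.card F : ℝ) ^ (m + 1) - Fintype.card F ^ m := by
    rw [sub_pos]
    exact_mod_cast Nat.pow_lt_pow_right hq m.lt_succ_self
  rw [ghwRatio_succ (by exact_mod_cast hq), div_mul_eq_mul_div, div_le_iff₀ hpos]
  linarith

theorem ghwRatio_mul_add_sub_le_GHW {M m : ℕ} {C : Submodule F (Fin n → F)} {x : ℝ}
    (hM : 1 ≤ M) (hMm : M ≤ m) (hm : m ≤ finrank F C) (hx : x ≤ GHW 1 C) :
    ghwRatio (Fintype.card F) M * x + (m - M) ≤ GHW m C := by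
  have hratio := ghwRatio_mul_GHW_one_le hM (hMm.trans hm)
  have hmono : (GHW M C : ℝ) + (m - M : ℕ) ≤ GHW m C := by exact_mod_cast GHW_add_sub_le hMm hm
  have hx' := mul_le_mul_of_nonneg_left hx
    (ghwRatio_nonneg (q := Fintype.card F) (by exact_mod_cast Fintype.card_pos) M)
  push_cast [Nat.cast_sub hMm] at hmono
  linarith

end RatioBound

theorem Nat.tendsto_sqrt_atTop : Tendsto Nat.sqrt atTop atTop :=
  tendsto_atTop_atTop.2 fun b => ⟨b * b, fun _ h => Nat.le_sqrt.2 h⟩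

section Asymptotics

variable {ι : Type*} {l : Filter ι} {u v : ι → ℕ}

theorem tendsto_atTop_of_tendsto_div_pos {ρ : ℝ} (hv : Tendsto v l atTop)
    (h : Tendsto (fun i => (u i : ℝ) / v i) l (𝓝 ρ)) (hρ : 0 < ρ) : Tendsto u l atTop := by
  rw [← tendsto_natCast_atTop_iff (R := ℝ)]
  refine (h.pos_mul_atTop hρ (tendsto_natCast_atTop_atTop.comp hv)).congr' ?_
  filter_upwards [hv.eventually_gt_atTop 0] with i hi
  exact div_mul_cancel₀ _ (Nat.cast_ne_zero.2 hi.ne')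

theorem tendsto_sqrt_div_of_le (hu : Tendsto u l atTop) (huv : ∀ i, u i ≤ v i) :
    Tendsto (fun i => (Nat.sqrt (u i) : ℝ) / v i) l (𝓝 0) := by
  have hs := tendsto_natCast_atTop_atTop (R := ℝ) |>.comp (Nat.tendsto_sqrt_atTop.comp hu)
  refine tendsto_of_tendsto_of_tendsto_of_le_of_le' tendsto_const_nhds
    (tendsto_inv_atTop_zero.comp hs) (Eventually.of_forall fun i => by positivity) ?_
  filter_upwards [hs.eventually_gt_atTop 0] with i hi
  have hsq : ((Nat.sqrt (u i) : ℝ)) * Nat.sqrt (u i) ≤ v i := by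
    exact_mod_cast (Nat.sqrt_le (u i)).trans (huv i)
  simp only [Function.comp_apply] at hi ⊢
  calc (Nat.sqrt (u i) : ℝ) / v i ≤ Nat.sqrt (u i) / (Nat.sqrt (u i) * Nat.sqrt (u i)) :=
        div_le_div_of_nonneg_left hi.le (by positivity) hsq
    _ = (Nat.sqrt (u i) : ℝ)⁻¹ := div_mul_cancel_left₀ hi.ne' _

end Asymptotics

theorem asymptotic_ratio_ghw_general {F : Type} [Field F] [Fintype F]
    (n k g m : ℕ → ℕ) (C : ∀ i : ℕ, Submodule F (Fin (n i) → F))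
    (R γ ρ : ℝ)
    (hn : Tendsto n atTop atTop)
    (hk : ∀ i, Module.finrank F ↥(C i) = k i)
    (hR : Tendsto (fun i => (k i : ℝ) / (n i : ℝ)) atTop (𝓝 R))
    (hγ : Tendsto (fun i => (g i : ℝ) / (n i : ℝ)) atTop (𝓝 γ))
    (hd1 : ∀ i, (n i : ℤ) - (k i : ℤ) - (g i : ℤ) ≤ (GHW 1 (C i) : ℤ))
    (hm : ∀ i, 1 ≤ m i ∧ m i ≤ k i)
    (hρ : Tendsto (fun i => (m i : ℝ) / (n i : ℝ)) atTop (𝓝 ρ))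
    (hρpos : 0 < ρ) :
    ((Fintype.card F : ℝ) / ((Fintype.card F : ℝ) - 1)) * (1 - R - γ) + ρ ≤
      atTop.liminf (fun i => (GHW (m i) (C i) : ℝ) / (n i : ℝ)) := by
  have hmC : ∀ i, m i ≤ Module.finrank F (C i) := fun i => (hm i).2.trans_eq (hk i).symm
  have hmn : ∀ i, m i ≤ n i := fun i =>
    (hmC i).trans ((C i).finrank_le.trans_eq (Module.finrank_fin_fun F))
  have hm_top : Tendsto m atTop atTop := tendsto_atTop_of_tendsto_div_pos hn hρ hρpos
  set M := fun i => Nat.sqrt (m i)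
  have hlim : Tendsto (fun i => ghwRatio (Fintype.card F) (M i) * (1 - k i / n i - g i / n i) +
      (m i / n i - M i / n i)) atTop
      (𝓝 ((Fintype.card F : ℝ) / ((Fintype.card F : ℝ) - 1) * (1 - R - γ) + (ρ - 0))) :=
    (((tendsto_ghwRatio (by exact_mod_cast Fintype.one_lt_card)).comp
      (Nat.tendsto_sqrt_atTop.comp hm_top)).mul ((tendsto_const_nhds.sub hR).sub hγ)).add
      (hρ.sub (tendsto_sqrt_div_of_le hm_top hmn))
  rw [sub_zero] at hlim
  have hlower : ∀ᶠ i in atTop, ghwRatio (Fintype.card F) (M i) * (1 - k i / n i - g i / n i) +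
      (m i / n i - M i / n i) ≤ (GHW (m i) (C i) : ℝ) / n i := by
    filter_upwards [hn.eventually_gt_atTop 0] with i hi
    have hn0 : (0 : ℝ) < n i := by exact_mod_cast hi
    have h := ghwRatio_mul_add_sub_le_GHW (Nat.sqrt_pos.2 (hm i).1) (Nat.sqrt_le_self _) (hmC i)
      (x := n i - k i - g i) (by exact_mod_cast hd1 i)
    rw [le_div_iff₀ hn0]
    refine le_of_eq_of_le ?_ h
    field_simp
    ring
  have hbdd : IsCoboundedUnder (· ≥ ·) atTop fun i => (GHW (m i) (C i) : ℝ) / n i :=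
    isBoundedUnder_of ⟨1, fun i => div_le_one_of_le₀ (by exact_mod_cast GHW_le_length (hmC i))
      (Nat.cast_nonneg _)⟩ |>.isCoboundedUnder_ge
  exact hlim.liminf_eq ▸ liminf_le_liminf hlower hlim.isBoundedUnder_ge hbdd

/-- Asymptotic lower bound via the ratio bound: if `d_1(C_i) ≥ n_i - k_i - g_i`
with `k_i/n_i → R`, `g_i/n_i → γ`, `1 - R - γ > 0` and `m_i/n_i → ρ > 0`
(`1 ≤ m_i ≤ k_i`), then
`liminf d_{m_i}(C_i)/n_i ≥ (q/(q-1))·(1 - R - γ) + ρ`. -/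
theorem asymptotic_ratio_ghw {F : Type} [Field F] [Fintype F]
    (n k g m : ℕ → ℕ) (C : ∀ i : ℕ, Submodule F (Fin (n i) → F))
    (R γ ρ : ℝ)
    (hn : Tendsto n atTop atTop)
    (hk : ∀ i, Module.finrank F ↥(C i) = k i)
    (hR : Tendsto (fun i => (k i : ℝ) / (n i : ℝ)) atTop (𝓝 R))
    (hγ : Tendsto (fun i => (g i : ℝ) / (n i : ℝ)) atTop (𝓝 γ))
    (hRγ : 0 < 1 - R - γ)
    (hd1 : ∀ i, (n i : ℤ) - (k i : ℤ) - (g i : ℤ) ≤ (GHW 1 (C i) : ℤ))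
    (hm : ∀ i, 1 ≤ m i ∧ m i ≤ k i)
    (hρ : Tendsto (fun i => (m i : ℝ) / (n i : ℝ)) atTop (𝓝 ρ))
    (hρpos : 0 < ρ) :
    ((Fintype.card F : ℝ) / ((Fintype.card F : ℝ) - 1)) * (1 - R - γ) + ρ ≤
      atTop.liminf (fun i => (GHW (m i) (C i) : ℝ) / (n i : ℝ)) :=
  asymptotic_ratio_ghw_general n k g m C R γ ρ hn hk hR hγ hd1 hm hρ hρpos
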